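/- arXiv:2604.13616 — 2 statements merged into one kernel-verified Lean document; each statement's English description precedes it below -/
import Mathlib

section
/- Let (M,g,dα) be a Killing exact magnetic system whose dual vector field X satisfies dα(X,·) = 0. If γ is a magnetic geodesic with γ'(0) = r·X_{γ(0)} for some r ∈ ℝ, then γ'(t) = r·X_{γ(t)} for all t, i.e., γ is an integral curve of r·X (up to parametrization). -/
open scoped RealInnerProductSpace

/-- For a Killing exact magnetic system with `dα(X,·) = 0`: a magnetic geodesic with
`γ'(0) = r • X_{γ(0)}` satisfies `γ'(t) = r • X_{γ(t)}` for all `t`, i.e. it is an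
integral curve of `r • X`.  Along-the-curve data as in the conservation statements:
`v` is the velocity, `Dv` its covariant derivative, `Xγ = X ∘ γ`, `DX t = (∇X)_{γ t}`;
the hypotheses encode skew-symmetry of `∇X` (Killing), `(∇X)(X)=0` (i.e. `dα(X,·)=0`),
the magnetic geodesic equation with `Y = 2∇X`, and metric compatibility giving the
derivatives of `|γ'|²`, `|X∘γ|²` and `g(X_γ, γ')`. -/
theorem killing_magnetic_reeb_direction_preserved
    {V : Type*} [NormedAddCommGroup V] [InnerProductSpace ℝ V]
    (v Dv Xγ : ℝ → V) (DX : ℝ → V →ₗ[ℝ] V) (r : ℝ)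
    (hKilling : ∀ t u w, ⟪DX t u, w⟫ = -⟪DX t w, u⟫)
    (hdαX : ∀ t, DX t (Xγ t) = 0)
    (hmg : ∀ t, Dv t = (2 : ℝ) • DX t (v t))
    (hcompat : ∀ t, HasDerivAt (fun s => ⟪Xγ s, v s⟫)
      (⟪DX t (v t), v t⟫ + ⟪Xγ t, Dv t⟫) t)
    (hE : ∀ t, HasDerivAt (fun s => ⟪v s, v s⟫) (2 * ⟪Dv t, v t⟫) t)
    (hXnorm : ∀ t, HasDerivAt (fun s => ⟪Xγ s, Xγ s⟫) (2 * ⟪DX t (v t), Xγ t⟫) t)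
    (hinit : v 0 = r • Xγ 0) :
    ∀ t : ℝ, v t = r • Xγ t := by
  set f : ℝ → ℝ := fun s => ⟪v s, v s⟫ - 2 * r * ⟪Xγ s, v s⟫ + r ^ 2 * ⟪Xγ s, Xγ s⟫ with hf
  -- key pointwise identities
  have hskew : ∀ t, ⟪DX t (v t), v t⟫ = 0 := fun t => by
    have := hKilling t (v t) (v t); linarith
  have hXv : ∀ t, ⟪DX t (v t), Xγ t⟫ = 0 := fun t => by
    have := hKilling t (v t) (Xγ t)
    rw [this, hdαX t]
    simp
  have hDvv : ∀ t, ⟪Dv t, v t⟫ = 0 := fun t => by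
    rw [hmg t, real_inner_smul_left, hskew t]; ring
  have hXDv : ∀ t, ⟪Xγ t, Dv t⟫ = 0 := fun t => by
    rw [hmg t, real_inner_smul_right, real_inner_comm, hXv t]; ring
  have hderiv : ∀ t, HasDerivAt f 0 t := by
    intro t
    have h := ((hE t).sub ((hcompat t).const_mul (2 * r))).add
      ((hXnorm t).const_mul (r ^ 2))
    have : 2 * ⟪Dv t, v t⟫ - 2 * r * (⟪DX t (v t), v t⟫ + ⟪Xγ t, Dv t⟫)
        + r ^ 2 * (2 * ⟪DX t (v t), Xγ t⟫) = 0 := by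
      rw [hDvv t, hXDv t, hskew t, hXv t]; ring
    rw [this] at h
    exact h
  have hconst : ∀ t, f t = f 0 := by
    intro t
    exact is_const_of_deriv_eq_zero (fun s => (hderiv s).differentiableAt)
      (fun s => (hderiv s).deriv) t 0
  intro t
  have hquad : f t = ⟪v t - r • Xγ t, v t - r • Xγ t⟫ := by
    simp only [inner_sub_sub_self, real_inner_smul_left, real_inner_smul_right,
      real_inner_comm (Xγ t) (v t), hf]
    ring
  have hf0 : f 0 = 0 := by
    have : v 0 - r • Xγ 0 = 0 := by rw [hinit]; abel
    have hq0 : f 0 = ⟪v 0 - r • Xγ 0, v 0 - r • Xγ 0⟫ := by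
      simp only [inner_sub_sub_self, real_inner_smul_left, real_inner_smul_right,
        real_inner_comm (Xγ 0) (v 0), hf]
      ring
    rw [hq0, this, inner_zero_left]
  have : ⟪v t - r • Xγ t, v t - r • Xγ t⟫ = (0:ℝ) := by rw [← hquad, hconst t, hf0]
  have := inner_self_eq_zero.mp this
  exact sub_eq_zero.mp this
end

section
/- Let (M,g,dα) be a Killing exact magnetic system whose dual vector field X satisfies dα(X,·) = 0. If γ is a magnetic geodesic with γ'(0) ∈ ker α_{γ(0)}, then γ'(t) ∈ ker α_{γ(t)} for all t. -/
open scoped RealInnerProductSpace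

/-- For a Killing exact magnetic system with `dα(X,·) = 0`: a magnetic geodesic with
`γ'(0) ∈ ker α_{γ(0)}` has `γ'(t) ∈ ker α_{γ(t)}` for all `t`.  Since `X` is the
`g`-dual of `α`, the condition `v ∈ ker α` reads `g(X, v) = 0`.  Along-the-curve data
and hypotheses are as in the conservation statement: `v` velocity, `Dv` its covariant
derivative, `Xγ = X ∘ γ`, `DX t = (∇X)_{γ t}` skew (Killing), `(∇X)(X)=0`
(i.e. `dα(X,·)=0`), magnetic geodesic equation with `Y = 2∇X`, metric compatibility. -/
theorem killing_magnetic_horizontality_preserved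
    {V : Type*} [NormedAddCommGroup V] [InnerProductSpace ℝ V]
    (v Dv Xγ : ℝ → V) (DX : ℝ → V →ₗ[ℝ] V)
    (hKilling : ∀ t u w, ⟪DX t u, w⟫ = -⟪DX t w, u⟫)
    (hdαX : ∀ t, DX t (Xγ t) = 0)
    (hmg : ∀ t, Dv t = (2 : ℝ) • DX t (v t))
    (hcompat : ∀ t, HasDerivAt (fun s => ⟪Xγ s, v s⟫)
      (⟪DX t (v t), v t⟫ + ⟪Xγ t, Dv t⟫) t)
    (hker : ⟪Xγ 0, v 0⟫ = 0) :
    ∀ t : ℝ, ⟪Xγ t, v t⟫ = 0 := by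
  have hzero : ∀ t, HasDerivAt (fun s => ⟪Xγ s, v s⟫) 0 t := by
    intro t
    have h1 : ⟪DX t (v t), v t⟫ = 0 := by
      have := hKilling t (v t) (v t); linarith
    have h2 : ⟪Xγ t, Dv t⟫ = 0 := by
      rw [hmg t, real_inner_smul_right]
      have h3 : ⟪DX t (v t), Xγ t⟫ = 0 := by
        rw [hKilling t (v t) (Xγ t), hdαX t, inner_zero_left, neg_zero]
      rw [real_inner_comm] at h3
      rw [h3, mul_zero]
    simpa [h1, h2] using hcompat t
  intro t
  have := is_const_of_deriv_eq_zero (f := fun s => ⟪Xγ s, v s⟫)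
    (fun s => (hzero s).differentiableAt) (fun s => (hzero s).deriv) t 0
  simpa [hker] using this
end
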